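/- For complex q, z with |q| < 1 and |zq| < 1, Σ_{n≥0} zⁿ q^{n²+n} / (zq; q²)_{n+1} = Σ_{n≥0} (−q; q²)_n (zq)ⁿ. -/

import Mathlib

open scoped BigOperators

/-- Finite q-Pochhammer symbol `(a; q)_n`. -/
noncomputable def qPoch (a q : ℂ) (n : ℕ) : ℂ :=
  ∏ k ∈ Finset.range n, (1 - a * q ^ k)

/-- Infinite q-Pochhammer symbol `(a; q)_∞`. -/
noncomputable def qPochInf (a q : ℂ) : ℂ :=
  ∏' k : ℕ, (1 - a * q ^ k)

/-!
Write `G(w) = ∑ (a; Q)ₙ wⁿ`. Since `(a; Q)ₙ₊₁ = (a; Q)ₙ (1 - a Qⁿ)`, it satisfies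
`(1 - w) G(w) = 1 - a w G(Q w)`. Unfolding this `N` times expresses `G(w)` as the `N`-th partial
sum of `∑ (-a)ⁿ Q^(n choose 2) wⁿ / (w; Q)ₙ₊₁` plus a remainder whose coefficient has ratio
`-a Qᴺ w / (1 - w Qᴺ) → 0`, so the remainder vanishes. The theorem is the case `a = -q`, `Q = q²`,
`w = z q`.
-/

open Finset Filter Topology

section qPochSeries

variable {a Q w : ℂ}

lemma qPoch_succ (a Q : ℂ) (n : ℕ) : qPoch a Q (n + 1) = qPoch a Q n * (1 - a * Q ^ n) :=
  prod_range_succ _ _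

lemma norm_qPoch_le_exp (a : ℂ) (hQ : ‖Q‖ < 1) (n : ℕ) :
    ‖qPoch a Q n‖ ≤ Real.exp (‖a‖ / (1 - ‖Q‖)) := by
  have hfactor (k : ℕ) : ‖1 - a * Q ^ k‖ ≤ Real.exp (‖a‖ * ‖Q‖ ^ k) := by
    calc ‖1 - a * Q ^ k‖ ≤ ‖(1 : ℂ)‖ + ‖a * Q ^ k‖ := norm_sub_le _ _
      _ = ‖a‖ * ‖Q‖ ^ k + 1 := by rw [norm_one, norm_mul, norm_pow, add_comm]
      _ ≤ Real.exp (‖a‖ * ‖Q‖ ^ k) := Real.add_one_le_exp _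
  have hgeom : ∑ k ∈ range n, ‖a‖ * ‖Q‖ ^ k ≤ ‖a‖ / (1 - ‖Q‖) := by
    rw [← mul_sum, div_eq_mul_inv, ← tsum_geometric_of_lt_one (norm_nonneg Q) hQ]
    exact mul_le_mul_of_nonneg_left ((summable_geometric_of_lt_one (norm_nonneg Q) hQ).sum_le_tsum
      _ fun k _ => pow_nonneg (norm_nonneg Q) k) (norm_nonneg a)
  calc ‖qPoch a Q n‖ = ∏ k ∈ range n, ‖1 - a * Q ^ k‖ := norm_prod _ _
    _ ≤ ∏ k ∈ range n, Real.exp (‖a‖ * ‖Q‖ ^ k) :=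
      prod_le_prod (fun _ _ => norm_nonneg _) fun k _ => hfactor k
    _ = Real.exp (∑ k ∈ range n, ‖a‖ * ‖Q‖ ^ k) := (Real.exp_sum _ _).symm
    _ ≤ Real.exp (‖a‖ / (1 - ‖Q‖)) := Real.exp_le_exp.2 hgeom

lemma norm_pow_mul_le (hQ : ‖Q‖ ≤ 1) (N : ℕ) : ‖Q ^ N * w‖ ≤ ‖w‖ := by
  rw [norm_mul, norm_pow]
  exact mul_le_of_le_one_left (norm_nonneg w) (pow_le_one₀ (norm_nonneg Q) hQ)

lemma one_sub_norm_le_norm_one_sub_mul_pow (hQ : ‖Q‖ ≤ 1) (k : ℕ) :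
    1 - ‖w‖ ≤ ‖1 - w * Q ^ k‖ := by
  have hwQ : ‖w * Q ^ k‖ ≤ ‖w‖ := mul_comm w (Q ^ k) ▸ norm_pow_mul_le hQ k
  calc 1 - ‖w‖ ≤ ‖(1 : ℂ)‖ - ‖w * Q ^ k‖ := by rw [norm_one]; linarith
    _ ≤ ‖1 - w * Q ^ k‖ := norm_sub_norm_le _ _

lemma one_sub_mul_pow_ne_zero (hQ : ‖Q‖ ≤ 1) (hw : ‖w‖ < 1) (k : ℕ) : 1 - w * Q ^ k ≠ 0 :=
  norm_pos_iff.1 <| (sub_pos.2 hw).trans_le (one_sub_norm_le_norm_one_sub_mul_pow hQ k)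

noncomputable def qPochSeries (a Q w : ℂ) : ℂ :=
  ∑' n : ℕ, qPoch a Q n * w ^ n

lemma norm_qPoch_mul_pow_le (hQ : ‖Q‖ < 1) (n : ℕ) :
    ‖qPoch a Q n * w ^ n‖ ≤ Real.exp (‖a‖ / (1 - ‖Q‖)) * ‖w‖ ^ n := by
  rw [norm_mul, norm_pow]
  exact mul_le_mul_of_nonneg_right (norm_qPoch_le_exp a hQ n) (pow_nonneg (norm_nonneg w) n)

lemma summable_qPoch_mul_pow (hQ : ‖Q‖ < 1) (hw : ‖w‖ < 1) :
    Summable fun n : ℕ => qPoch a Q n * w ^ n :=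
  .of_norm_bounded ((summable_geometric_of_lt_one (norm_nonneg w) hw).mul_left _)
    (norm_qPoch_mul_pow_le hQ)

lemma norm_qPochSeries_le (hQ : ‖Q‖ < 1) (hw : ‖w‖ < 1) :
    ‖qPochSeries a Q w‖ ≤ Real.exp (‖a‖ / (1 - ‖Q‖)) * (1 - ‖w‖)⁻¹ :=
  tsum_of_norm_bounded ((hasSum_geometric_of_lt_one (norm_nonneg w) hw).mul_left _)
    (norm_qPoch_mul_pow_le hQ)

lemma one_sub_mul_qPochSeries (hQ : ‖Q‖ < 1) (hw : ‖w‖ < 1) :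
    (1 - w) * qPochSeries a Q w = 1 - a * w * qPochSeries a Q (Q * w) := by
  have hQw : ‖Q * w‖ < 1 := by
    simpa using (norm_pow_mul_le hQ.le 1).trans_lt hw
  have hshift : qPochSeries a Q w = 1 + ∑' n : ℕ, qPoch a Q (n + 1) * w ^ (n + 1) := by
    rw [qPochSeries, (summable_qPoch_mul_pow hQ hw).tsum_eq_zero_add]
    simp [qPoch]
  have hterm (n : ℕ) : qPoch a Q (n + 1) * w ^ (n + 1)
      = w * (qPoch a Q n * w ^ n) - a * w * (qPoch a Q n * (Q * w) ^ n) := by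
    rw [qPoch_succ]; ring
  rw [tsum_congr hterm, ((summable_qPoch_mul_pow hQ hw).mul_left w).tsum_sub
    ((summable_qPoch_mul_pow hQ hQw).mul_left _), tsum_mul_left, tsum_mul_left] at hshift
  rw [← qPochSeries, ← qPochSeries] at hshift
  linear_combination hshift

/-- The coefficient of `qPochSeries a Q (Q ^ N * w)` after unfolding `one_sub_mul_qPochSeries`
`N` times, starting from `qPochSeries a Q w`. -/
noncomputable def unfoldCoeff (a Q w : ℂ) (N : ℕ) : ℂ :=
  (-a) ^ N * Q ^ N.choose 2 * w ^ N / qPoch w Q N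

lemma unfoldCoeff_succ (n : ℕ) :
    unfoldCoeff a Q w (n + 1) = unfoldCoeff a Q w n * (-a * (Q ^ n * w)) / (1 - w * Q ^ n) := by
  rw [unfoldCoeff, unfoldCoeff, qPoch_succ, Nat.choose_succ_succ' n 1, Nat.choose_one_right,
    ← div_div]
  ring

lemma qPochSeries_eq_sum_add_unfoldCoeff_mul (hQ : ‖Q‖ < 1) (hw : ‖w‖ < 1) (N : ℕ) :
    qPochSeries a Q w = ∑ n ∈ range N, unfoldCoeff a Q w n / (1 - w * Q ^ n)
      + unfoldCoeff a Q w N * qPochSeries a Q (Q ^ N * w) := by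
  induction N with
  | zero => simp [unfoldCoeff, qPoch]
  | succ N ih =>
    have hstep : qPochSeries a Q (Q ^ N * w)
        = (1 - a * (Q ^ N * w) * qPochSeries a Q (Q ^ (N + 1) * w)) / (1 - w * Q ^ N) := by
      have hfun := one_sub_mul_qPochSeries (a := a) hQ ((norm_pow_mul_le hQ.le N).trans_lt hw)
      rw [eq_div_iff (one_sub_mul_pow_ne_zero hQ.le hw N), pow_succ', mul_assoc Q]
      linear_combination hfun
    rw [ih, hstep, sum_range_succ, unfoldCoeff_succ]
    ring

lemma norm_unfoldCoeff_succ_le (hQ : ‖Q‖ ≤ 1) (hw : ‖w‖ < 1) (n : ℕ) :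
    ‖unfoldCoeff a Q w (n + 1)‖ ≤ ‖a‖ * ‖Q ^ n * w‖ / (1 - ‖w‖) * ‖unfoldCoeff a Q w n‖ := by
  rw [unfoldCoeff_succ, norm_div, norm_mul, norm_mul, norm_neg]
  calc ‖unfoldCoeff a Q w n‖ * (‖a‖ * ‖Q ^ n * w‖) / ‖1 - w * Q ^ n‖
      ≤ ‖unfoldCoeff a Q w n‖ * (‖a‖ * ‖Q ^ n * w‖) / (1 - ‖w‖) :=
        div_le_div_of_nonneg_left (by positivity) (sub_pos.2 hw)
          (one_sub_norm_le_norm_one_sub_mul_pow hQ n)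
    _ = ‖a‖ * ‖Q ^ n * w‖ / (1 - ‖w‖) * ‖unfoldCoeff a Q w n‖ := by ring

lemma summable_norm_unfoldCoeff (hQ : ‖Q‖ < 1) (hw : ‖w‖ < 1) :
    Summable fun n => ‖unfoldCoeff a Q w n‖ := by
  have hratio : Tendsto (fun n : ℕ => ‖a‖ * ‖Q ^ n * w‖ / (1 - ‖w‖)) atTop (𝓝 0) := by
    simpa [norm_mul, norm_pow, mul_assoc] using
      (((tendsto_pow_atTop_nhds_zero_of_lt_one (norm_nonneg Q) hQ).mul_const ‖w‖).const_mul
        ‖a‖).div_const (1 - ‖w‖)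
  refine summable_of_ratio_norm_eventually_le (r := 1 / 2) (by norm_num) ?_
  filter_upwards [hratio.eventually_lt_const (by norm_num : (0 : ℝ) < 1 / 2)] with n hn
  rw [norm_norm, norm_norm]
  exact (norm_unfoldCoeff_succ_le hQ.le hw n).trans
    (mul_le_mul_of_nonneg_right hn.le (norm_nonneg _))

lemma tendsto_unfoldCoeff_mul_qPochSeries (hQ : ‖Q‖ < 1) (hw : ‖w‖ < 1) :
    Tendsto (fun N => unfoldCoeff a Q w N * qPochSeries a Q (Q ^ N * w)) atTop (𝓝 0) := by
  have hbound (N : ℕ) :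
      ‖qPochSeries a Q (Q ^ N * w)‖ ≤ Real.exp (‖a‖ / (1 - ‖Q‖)) * (1 - ‖w‖)⁻¹ := by
    have hN := norm_pow_mul_le (w := w) hQ.le N
    refine (norm_qPochSeries_le hQ (hN.trans_lt hw)).trans ?_
    gcongr
  have hcoeff := ((summable_norm_unfoldCoeff (a := a) hQ hw).tendsto_atTop_zero).mul_const
    (Real.exp (‖a‖ / (1 - ‖Q‖)) * (1 - ‖w‖)⁻¹)
  rw [zero_mul] at hcoeff
  refine squeeze_zero_norm (fun N => ?_) hcoeff
  rw [norm_mul]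
  exact mul_le_mul_of_nonneg_left (hbound N) (norm_nonneg _)

theorem tsum_neg_pow_mul_pow_choose_div_qPoch (hQ : ‖Q‖ < 1) (hw : ‖w‖ < 1) :
    ∑' n : ℕ, (-a) ^ n * Q ^ n.choose 2 * w ^ n / qPoch w Q (n + 1) = qPochSeries a Q w := by
  have hterm (n : ℕ) : (-a) ^ n * Q ^ n.choose 2 * w ^ n / qPoch w Q (n + 1)
      = unfoldCoeff a Q w n / (1 - w * Q ^ n) := by
    rw [qPoch_succ, ← div_div, unfoldCoeff]
  have hsumm : Summable fun n => unfoldCoeff a Q w n / (1 - w * Q ^ n) :=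
    .of_norm_bounded ((summable_norm_unfoldCoeff hQ hw).div_const (1 - ‖w‖)) fun n => by
      rw [norm_div]
      exact div_le_div_of_nonneg_left (norm_nonneg _) (sub_pos.2 hw)
        (one_sub_norm_le_norm_one_sub_mul_pow hQ.le n)
  have hpartial : Tendsto (fun N => ∑ n ∈ range N, unfoldCoeff a Q w n / (1 - w * Q ^ n))
      atTop (𝓝 (qPochSeries a Q w)) := by
    have hlim := (tendsto_const_nhds (x := qPochSeries a Q w)).sub
      (tendsto_unfoldCoeff_mul_qPochSeries (a := a) hQ hw)
    rw [sub_zero] at hlim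
    refine hlim.congr fun N => ?_
    rw [qPochSeries_eq_sum_add_unfoldCoeff_mul hQ hw N]
    ring
  simp_rw [hterm]
  exact tendsto_nhds_unique hsumm.hasSum.tendsto_sum_nat hpartial

end qPochSeries

theorem nu_spec_2_4_general (q z : ℂ) (hq : ‖q‖ < 1) (hzq : ‖z * q‖ < 1) :
    ∑' n : ℕ, z ^ n * q ^ (n ^ 2 + n) / qPoch (z * q) (q ^ 2) (n + 1)
      = ∑' n : ℕ, qPoch (-q) (q ^ 2) n * (z * q) ^ n := by
  have hq2 : ‖q ^ 2‖ < 1 := by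
    rw [norm_pow]
    exact pow_lt_one₀ (norm_nonneg q) hq two_ne_zero
  have hexponent (n : ℕ) : n ^ 2 + n = 2 * n.choose 2 + 2 * n := by
    induction n with
    | zero => rfl
    | succ n ih =>
      rw [Nat.choose_succ_succ' n 1, Nat.choose_one_right]
      ring_nf at ih ⊢
      omega
  refine Eq.trans (tsum_congr fun n => ?_) (tsum_neg_pow_mul_pow_choose_div_qPoch hq2 hzq)
  rw [neg_neg, hexponent n, ← pow_mul]
  ring

theorem nu_spec_2_4 (q z : ℂ) (hq : ‖q‖ < 1) (hzq : ‖z * q‖ < 1)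
    (hden : ∀ k : ℕ, 1 - z * q ^ (2 * k + 1) ≠ 0) :
    ∑' n : ℕ, z ^ n * q ^ (n ^ 2 + n) / qPoch (z * q) (q ^ 2) (n + 1)
      = ∑' n : ℕ, qPoch (-q) (q ^ 2) n * (z * q) ^ n :=
  nu_spec_2_4_general q z hq hzq
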